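/- Let A be a decomposable convex subset of L^p(Ω;E). Then the set of extreme points of A is decomposable: if ξ and ζ are extreme points of A and B is an event, then 1_B ξ + 1_{B^c} ζ is an extreme point of A. If moreover A is compact convex, then A is decomposable if and only if its set of extreme points is decomposable. -/

import Mathlib

open MeasureTheory
open scoped ENNReal

/-- `A ⊆ L^p(Ω;E)` is decomposable: together with `f` and `g` it contains (the class of)
`1_B f + 1_{B^c} g` for every measurable `B`. -/
def IsDecomposable {Ω : Type*} {mΩ : MeasurableSpace Ω} {μ : Measure Ω} {E : Type*}
    [NormedAddCommGroup E] {p : ℝ≥0∞} (A : Set (Lp E p μ)) : Prop :=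
  ∀ f ∈ A, ∀ g ∈ A, ∀ B : Set Ω, MeasurableSet B →
    ∀ h : Lp E p μ, (h : Ω → E) =ᵐ[μ] (B.indicator f + Bᶜ.indicator g) → h ∈ A

/-- The decomposable hull of `A`: the smallest decomposable subset of `L^p(Ω;E)`
containing `A`. -/
def decHull {Ω : Type*} {mΩ : MeasurableSpace Ω} {μ : Measure Ω} {E : Type*}
    [NormedAddCommGroup E] {p : ℝ≥0∞} (A : Set (Lp E p μ)) : Set (Lp E p μ) :=
  ⋂₀ {C : Set (Lp E p μ) | A ⊆ C ∧ IsDecomposable C}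

/-! Write `P_B (f, g)` for the class of `1_B f + 1_{Bᶜ} g`; it is a continuous linear map of the
pair `(f, g)` with `P_B (f, f) = f`, `P_B (P_B (f, g), k) = P_B (f, k)` and
`P_B (k, P_B (f, g)) = P_B (k, g)`. If `P_B (ξ, ζ) = a y + b z` with `y, z ∈ A`, these identities
give `ξ = a P_B (y, ξ) + b P_B (z, ξ)` and `ζ = a P_B (ζ, y) + b P_B (ζ, z)`, so extremality of `ξ`
and `ζ` forces `P_B (y, ξ) = ξ` and `P_B (ζ, y) = ζ`, whence `y = P_B (y, y) = P_B (ξ, ζ)`.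
Conversely, if `A` is compact and convex, Krein–Milman gives
`A × A = closure (conv (ext A × ext A))`, which the continuous linear map `P_B` sends into
`closure (conv (ext A)) = A`. -/

open Set

theorem Set.MapsTo.closure_convexHull {𝕜 V W : Type*} [Semiring 𝕜] [PartialOrder 𝕜]
    [AddCommMonoid V] [Module 𝕜 V] [TopologicalSpace V]
    [AddCommMonoid W] [Module 𝕜 W] [TopologicalSpace W]
    {T : V →L[𝕜] W} {X : Set V} {Y : Set W} (h : MapsTo T X Y) :
    MapsTo T (closure (convexHull 𝕜 X)) (closure (convexHull 𝕜 Y)) := by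
  refine MapsTo.closure ?_ T.continuous
  rw [mapsTo_iff_image_subset, ← ContinuousLinearMap.coe_coe, LinearMap.image_convexHull]
  exact convexHull_mono h.image_subset

namespace MeasureTheory.Lp

variable {Ω E : Type*} {mΩ : MeasurableSpace Ω} {μ : Measure Ω} [NormedAddCommGroup E]
  [NormedSpace ℝ E] {p : ℝ≥0∞} [Fact (1 ≤ p)] {B : Set Ω}

noncomputable def indicatorCLM (hB : MeasurableSet B) : Lp E p μ →L[ℝ] Lp E p μ :=
  LinearMap.mkContinuous
    { toFun := fun f => ((Lp.memLp f).indicator hB).toLp (B.indicator f)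
      map_add' := fun f g => by
        rw [← MemLp.toLp_add, MemLp.toLp_eq_toLp_iff, ← Set.indicator_add']
        exact (Lp.coeFn_add f g).indicator
      map_smul' := fun c f => by
        rw [RingHom.id_apply, ← MemLp.toLp_const_smul, MemLp.toLp_eq_toLp_iff]
        exact (Lp.coeFn_smul c f).indicator.trans (Set.indicator_const_smul B c f).eventuallyEq }
    1 fun f => by
      rw [one_mul, LinearMap.coe_mk, AddHom.coe_mk, Lp.norm_toLp, Lp.norm_def]
      exact ENNReal.toReal_mono (Lp.eLpNorm_ne_top f) (eLpNorm_indicator_le _)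

theorem coeFn_indicatorCLM (hB : MeasurableSet B) (f : Lp E p μ) :
    indicatorCLM hB f =ᵐ[μ] B.indicator f := by
  rw [indicatorCLM, LinearMap.mkContinuous_apply, LinearMap.coe_mk, AddHom.coe_mk]
  exact MemLp.coeFn_toLp _

noncomputable def piecewiseCLM (hB : MeasurableSet B) : Lp E p μ × Lp E p μ →L[ℝ] Lp E p μ :=
  (indicatorCLM hB).comp (.fst ℝ _ _) + (indicatorCLM hB.compl).comp (.snd ℝ _ _)

theorem coeFn_piecewiseCLM (hB : MeasurableSet B) (f g : Lp E p μ) :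
    piecewiseCLM hB (f, g) =ᵐ[μ] B.indicator f + Bᶜ.indicator g := by
  filter_upwards [Lp.coeFn_add (indicatorCLM hB f) (indicatorCLM hB.compl g),
    coeFn_indicatorCLM hB f, coeFn_indicatorCLM hB.compl g] with ω hadd hf hg
  simp_all [piecewiseCLM]

theorem piecewiseCLM_eq_iff (hB : MeasurableSet B) {f g h : Lp E p μ} :
    piecewiseCLM hB (f, g) = h ↔ h =ᵐ[μ] B.indicator f + Bᶜ.indicator g := by
  rw [Lp.ext_iff]
  exact ⟨fun hfg => hfg.symm.trans (coeFn_piecewiseCLM hB f g),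
    fun hfg => (coeFn_piecewiseCLM hB f g).trans hfg.symm⟩

theorem piecewiseCLM_self (hB : MeasurableSet B) (f : Lp E p μ) : piecewiseCLM hB (f, f) = f := by
  rw [piecewiseCLM_eq_iff, Set.indicator_self_add_compl]

theorem piecewiseCLM_piecewiseCLM_left (hB : MeasurableSet B) (f g k : Lp E p μ) :
    piecewiseCLM hB (piecewiseCLM hB (f, g), k) = piecewiseCLM hB (f, k) := by
  rw [piecewiseCLM_eq_iff]
  filter_upwards [coeFn_piecewiseCLM hB f g, coeFn_piecewiseCLM hB f k] with ω hfg hfk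
  by_cases hω : ω ∈ B <;> simp [hfg, hfk, hω]

theorem piecewiseCLM_piecewiseCLM_right (hB : MeasurableSet B) (f g k : Lp E p μ) :
    piecewiseCLM hB (k, piecewiseCLM hB (f, g)) = piecewiseCLM hB (k, g) := by
  rw [piecewiseCLM_eq_iff]
  filter_upwards [coeFn_piecewiseCLM hB f g, coeFn_piecewiseCLM hB k g] with ω hfg hkg
  by_cases hω : ω ∈ B <;> simp [hfg, hkg, hω]

end MeasureTheory.Lp

open Lp

section

variable {Ω E : Type*} {mΩ : MeasurableSpace Ω} {μ : Measure Ω} [NormedAddCommGroup E]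
  [NormedSpace ℝ E] {p : ℝ≥0∞} [Fact (1 ≤ p)] {A : Set (Lp E p μ)}

theorem isDecomposable_iff_piecewiseCLM_mem : IsDecomposable A ↔
    ∀ (B : Set Ω) (hB : MeasurableSet B), ∀ f ∈ A, ∀ g ∈ A, piecewiseCLM hB (f, g) ∈ A := by
  refine ⟨fun hA B hB f hf g hg => hA f hf g hg B hB _ (coeFn_piecewiseCLM hB f g),
    fun hA f hf g hg B hB h hh => ?_⟩
  rw [← (piecewiseCLM_eq_iff hB).2 hh]
  exact hA B hB f hf g hg

theorem IsDecomposable.extremePoints (hA : IsDecomposable A) :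
    IsDecomposable (A.extremePoints ℝ) := by
  rw [isDecomposable_iff_piecewiseCLM_mem] at hA ⊢
  intro B hB ξ hξ ζ hζ
  refine ⟨hA B hB ξ hξ.1 ζ hζ.1, fun y hy z hz ⟨a, b, ha, hb, hab, hyz⟩ => ?_⟩
  set P := piecewiseCLM (E := E) (p := p) (μ := μ) hB
  have hξ_seg : ξ ∈ openSegment ℝ (P (y, ξ)) (P (z, ξ)) := by
    refine ⟨a, b, ha, hb, hab, ?_⟩
    rw [← map_smul, ← map_smul, ← map_add, Prod.smul_mk, Prod.smul_mk, Prod.mk_add_mk, hyz,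
      ← add_smul, hab, one_smul, piecewiseCLM_piecewiseCLM_left, piecewiseCLM_self]
  have hζ_seg : ζ ∈ openSegment ℝ (P (ζ, y)) (P (ζ, z)) := by
    refine ⟨a, b, ha, hb, hab, ?_⟩
    rw [← map_smul, ← map_smul, ← map_add, Prod.smul_mk, Prod.smul_mk, Prod.mk_add_mk, hyz,
      ← add_smul, hab, one_smul, piecewiseCLM_piecewiseCLM_right, piecewiseCLM_self]
  have hyξ : P (y, ξ) = ξ := hξ.2 (hA B hB y hy ξ hξ.1) (hA B hB z hz ξ hξ.1) hξ_seg
  have hζy : P (ζ, y) = ζ := hζ.2 (hA B hB ζ hζ.1 y hy) (hA B hB ζ hζ.1 z hz) hζ_seg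
  calc y = P (y, y) := (piecewiseCLM_self hB y).symm
    _ = P (P (y, ξ), P (ζ, y)) := by
      rw [piecewiseCLM_piecewiseCLM_left, piecewiseCLM_piecewiseCLM_right]
    _ = P (ξ, ζ) := by rw [hyξ, hζy]

theorem IsDecomposable.of_extremePoints (hcomp : IsCompact A) (hconv : Convex ℝ A)
    (hext : IsDecomposable (A.extremePoints ℝ)) : IsDecomposable A := by
  rw [isDecomposable_iff_piecewiseCLM_mem] at hext ⊢
  intro B hB f hf g hg
  have hKM : closure (convexHull ℝ (A.extremePoints ℝ)) = A :=
    closure_convexHull_extremePoints hcomp hconv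
  have hmaps : MapsTo (piecewiseCLM hB) (A.extremePoints ℝ ×ˢ A.extremePoints ℝ)
      (A.extremePoints ℝ) := fun x hx => hext B hB x.1 hx.1 x.2 hx.2
  have hfg : (f, g) ∈ closure (convexHull ℝ (A.extremePoints ℝ ×ˢ A.extremePoints ℝ)) := by
    rw [convexHull_prod, closure_prod_eq, hKM]
    exact ⟨hf, hg⟩
  exact hKM ▸ hmaps.closure_convexHull hfg

end

theorem extremePoints_decomposable_general
    {Ω : Type*} {mΩ : MeasurableSpace Ω} {μ : Measure Ω}
    {E : Type*} [NormedAddCommGroup E] [NormedSpace ℝ E] {p : ℝ≥0∞} [Fact (1 ≤ p)]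
    (A : Set (Lp E p μ)) (hconv : Convex ℝ A) :
    (IsDecomposable A → IsDecomposable (A.extremePoints ℝ)) ∧
    (IsCompact A → (IsDecomposable A ↔ IsDecomposable (A.extremePoints ℝ))) :=
  ⟨IsDecomposable.extremePoints,
    fun hcomp => ⟨IsDecomposable.extremePoints, IsDecomposable.of_extremePoints hcomp hconv⟩⟩

/-- For a convex subset `A` of `L^p(Ω;E)`: if `A` is decomposable then its set of extreme
points is decomposable; if moreover `A` is compact, then `A` is decomposable if and only
if its set of extreme points is decomposable. -/
theorem extremePoints_decomposable
    {Ω : Type*} {mΩ : MeasurableSpace Ω} {μ : Measure Ω} [IsProbabilityMeasure μ]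
    {E : Type*} [NormedAddCommGroup E] [NormedSpace ℝ E] [CompleteSpace E]
    [SecondCountableTopology E] {p : ℝ≥0∞} [Fact (1 ≤ p)] (hp' : p ≠ ⊤)
    (A : Set (Lp E p μ)) (hconv : Convex ℝ A) :
    (IsDecomposable A → IsDecomposable (A.extremePoints ℝ)) ∧
    (IsCompact A → (IsDecomposable A ↔ IsDecomposable (A.extremePoints ℝ))) :=
  extremePoints_decomposable_general (mΩ := mΩ) A hconv
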